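/- Let X be a geodesic metric space with basepoint e, and for a Morse gauge N let X_e^{(N)} be the set of points y ∈ X such that some geodesic [e,y] is N-Morse. Then X_e^{(N)}, with the restricted metric, is 8·N(3,0)-hyperbolic in the four-point Gromov product sense: for all w,x,y,z ∈ X_e^{(N)}, (x·y)_w ≥ min{(x·z)_w, (z·y)_w} − 8·N(3,0). -/

import Mathlib

open Set Metric Filter

/-- A map is a geodesic on the interval `I`: distances equal parameter differences. -/
def IsGeodesicOn {X : Type*} [MetricSpace X] (γ : ℝ → X) (I : Set ℝ) : Prop :=
  ∀ s ∈ I, ∀ t ∈ I, dist (γ s) (γ t) = |s - t|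

/-- A `(K,C)`-quasigeodesic on the interval `I`. -/
def IsQuasigeodesicOn {X : Type*} [MetricSpace X] (K C : ℝ) (q : ℝ → X) (I : Set ℝ) : Prop :=
  ∀ s ∈ I, ∀ t ∈ I,
    (1 / K) * |s - t| - C ≤ dist (q s) (q t) ∧ dist (q s) (q t) ≤ K * |s - t| + C

/-- The closed `r`-neighborhood of a subset. -/
def nbhd {X : Type*} [MetricSpace X] (A : Set X) (r : ℝ) : Set X :=
  {x | ∃ y ∈ A, dist x y ≤ r}

/-- A path `γ` (on domain `I`) is `N`-Morse: every `(K,C)`-quasigeodesic with endpoints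
on `γ` lies in the `N K C`-neighborhood of `γ`. -/
def IsMorseOn {X : Type*} [MetricSpace X] (N : ℝ → ℝ → ℝ) (γ : ℝ → X) (I : Set ℝ) : Prop :=
  ∀ K C : ℝ, 1 ≤ K → 0 ≤ C → ∀ (q : ℝ → X) (a b : ℝ), a ≤ b →
    IsQuasigeodesicOn K C q (Icc a b) → q a ∈ γ '' I → q b ∈ γ '' I →
    q '' Icc a b ⊆ nbhd (γ '' I) (N K C)

/-- A Morse gauge takes nonnegative values. -/
def MorseGauge (N : ℝ → ℝ → ℝ) : Prop := ∀ K C : ℝ, 1 ≤ K → 0 ≤ C → 0 ≤ N K C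

/-- A geodesic metric space: any two points are joined by a geodesic. -/
def GeodesicSpace (X : Type*) [MetricSpace X] : Prop :=
  ∀ x y : X, ∃ γ : ℝ → X, IsGeodesicOn γ (Icc 0 (dist x y)) ∧ γ 0 = x ∧ γ (dist x y) = y

/-- The set of points joined to `e` by an N-Morse geodesic. -/
def stratum {X : Type*} [MetricSpace X] (N : ℝ → ℝ → ℝ) (e : X) : Set X :=
  {y | ∃ (γ : ℝ → X) (L : ℝ), 0 ≤ L ∧ IsGeodesicOn γ (Icc 0 L) ∧
    γ 0 = e ∧ γ L = y ∧ IsMorseOn N γ (Icc 0 L)}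

/-- The Gromov product `(x·y)_w`. -/
noncomputable def gromovProd {X : Type*} [MetricSpace X] (w x y : X) : ℝ :=
  (dist w x + dist w y - dist x y) / 2

/-!
Fix Morse geodesics `α`, `ζ` from `e` to `x`, `z`, a geodesic `σ` from `z` to `x`, a point
`σ v` of `σ` nearest to `e` and a geodesic `η` from `e` to `σ v`. Following `η` and then `σ`
from `σ v` to `x` gives a `(3,0)`-quasigeodesic from `e` to `x`, so by the Morse property
`η` stays `2 N(3,0)`-close to `α` up to time `(x·z)_e ≤ d(e, σ v)`; symmetrically for `ζ`.
Hence `α` and `ζ` `4 N(3,0)`-fellow-travel up to time `(x·z)_e`, which gives the four-point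
condition at the base point `e` with constant `4 N(3,0)`. The usual base-change argument
for the four-point condition doubles the constant at any other base point.
-/

section

variable {X : Type*}

noncomputable def concatAt (η σ : ℝ → X) (h : ℝ) : ℝ → X :=
  fun s => if s ≤ h then η s else σ (s - h)

section Concat

variable {η σ : ℝ → X} {h s u : ℝ}

lemma concatAt_of_le (hs : s ≤ h) : concatAt η σ h s = η s := if_pos hs

lemma concatAt_add (hjoin : η h = σ 0) (hu : 0 ≤ u) : concatAt η σ h (h + u) = σ u := by
  rcases hu.eq_or_lt with rfl | hu
  · rw [add_zero, concatAt_of_le le_rfl, hjoin]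
  · rw [concatAt, if_neg (by linarith), add_sub_cancel_left]

end Concat

variable [MetricSpace X]

namespace IsGeodesicOn

variable {γ : ℝ → X} {I : Set ℝ} {L s t : ℝ}

lemma dist_of_le (hγ : IsGeodesicOn γ I) (hs : s ∈ I) (ht : t ∈ I) (hst : s ≤ t) :
    dist (γ s) (γ t) = t - s := by
  rw [hγ s hs t ht, abs_sub_comm, abs_of_nonneg (sub_nonneg.2 hst)]

lemma dist_zero (hγ : IsGeodesicOn γ (Icc 0 L)) (ht : t ∈ Icc 0 L) :
    dist (γ 0) (γ t) = t := by
  rw [hγ.dist_of_le (left_mem_Icc.2 (ht.1.trans ht.2)) ht ht.1, sub_zero]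

lemma shift (hγ : IsGeodesicOn γ (Icc 0 L)) (hs : s ∈ Icc 0 L) :
    IsGeodesicOn (fun u => γ (s + u)) (Icc 0 (L - s)) := by
  intro a ha b hb
  rw [hγ _ ⟨by linarith [hs.1, ha.1], by linarith [ha.2]⟩ _
    ⟨by linarith [hs.1, hb.1], by linarith [hb.2]⟩, add_sub_add_left_eq_sub]

lemma reverse (hγ : IsGeodesicOn γ (Icc 0 L)) :
    IsGeodesicOn (fun u => γ (L - u)) (Icc 0 L) := by
  intro a ha b hb
  rw [hγ _ ⟨by linarith [ha.2], by linarith [ha.1]⟩ _ ⟨by linarith [hb.2], by linarith [hb.1]⟩,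
    sub_sub_sub_cancel_left, abs_sub_comm]

lemma continuousOn (hγ : IsGeodesicOn γ I) : ContinuousOn γ I :=
  (LipschitzOnWith.of_dist_le_mul fun s hs t ht => by
    rw [hγ s hs t ht, Real.dist_eq, NNReal.coe_one, one_mul]).continuousOn

lemma exists_nearest (hγ : IsGeodesicOn γ (Icc 0 L)) (hL : 0 ≤ L) (e : X) :
    ∃ v ∈ Icc 0 L, ∀ u ∈ Icc 0 L, dist e (γ v) ≤ dist e (γ u) :=
  let ⟨v, hv, hmin⟩ := isCompact_Icc.exists_isMinOn (nonempty_Icc.2 hL)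
    ((continuous_const.dist continuous_id).comp_continuousOn hγ.continuousOn)
  ⟨v, hv, fun _ hu => hmin hu⟩

lemma dist_le_two_mul_of_mem_nbhd (hγ : IsGeodesicOn γ (Icc 0 L)) (ht : t ∈ Icc 0 L) {p : X}
    {r : ℝ} (hp : dist (γ 0) p = t) (hmem : p ∈ nbhd (γ '' Icc 0 L) r) :
    dist p (γ t) ≤ 2 * r := by
  obtain ⟨_, ⟨s, hs, rfl⟩, hps⟩ := hmem
  have hst : |s - t| ≤ r := by
    rw [abs_sub_le_iff]
    constructor <;> linarith [dist_triangle (γ 0) p (γ s), dist_triangle (γ 0) (γ s) p,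
      dist_comm p (γ s), hγ.dist_zero hs]
  calc dist p (γ t) ≤ dist p (γ s) + dist (γ s) (γ t) := dist_triangle _ _ _
    _ ≤ 2 * r := by rw [hγ s hs t ht]; linarith

end IsGeodesicOn

lemma gromovProd_comm (w x y : X) : gromovProd w x y = gromovProd w y x := by
  unfold gromovProd
  rw [dist_comm x y]
  ring

lemma gromovProd_nonneg (w x y : X) : 0 ≤ gromovProd w x y := by
  unfold gromovProd
  linarith [dist_triangle x w y, dist_comm x w]

lemma gromovProd_le_dist_left (w x y : X) : gromovProd w x y ≤ dist w x := by
  unfold gromovProd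
  linarith [dist_triangle w x y]

lemma gromovProd_eq_base_change (e w x y : X) :
    gromovProd w x y =
      dist e w - gromovProd e w x - gromovProd e w y + gromovProd e x y := by
  unfold gromovProd
  ring

namespace IsGeodesicOn

variable {γ : ℝ → X} {L t : ℝ}

lemma gromovProd_le (hγ : IsGeodesicOn γ (Icc 0 L)) (ht : t ∈ Icc 0 L) (w : X) :
    gromovProd (γ 0) (γ t) w ≤ gromovProd (γ 0) (γ L) w := by
  have hL : L ∈ Icc 0 L := right_mem_Icc.2 (ht.1.trans ht.2)
  unfold gromovProd
  rw [hγ.dist_zero ht, hγ.dist_zero hL]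
  linarith [dist_triangle (γ L) (γ t) w, dist_comm (γ L) (γ t), hγ.dist_of_le ht hL ht.2]

lemma gromovProd_le_dist (hγ : IsGeodesicOn γ (Icc 0 L)) (ht : t ∈ Icc 0 L) (e : X) :
    gromovProd e (γ 0) (γ L) ≤ dist e (γ t) := by
  have hL : L ∈ Icc 0 L := right_mem_Icc.2 (ht.1.trans ht.2)
  unfold gromovProd
  linarith [dist_triangle e (γ t) (γ 0), dist_triangle e (γ t) (γ L), hγ.dist_zero ht,
    dist_comm (γ t) (γ 0), hγ.dist_of_le ht hL ht.2, hγ.dist_zero hL]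

end IsGeodesicOn

lemma isQuasigeodesicOn_of_le {K C : ℝ} {q : ℝ → X} {I : Set ℝ}
    (h : ∀ s ∈ I, ∀ t ∈ I, s ≤ t →
      (1 / K) * (t - s) - C ≤ dist (q s) (q t) ∧ dist (q s) (q t) ≤ K * (t - s) + C) :
    IsQuasigeodesicOn K C q I := by
  intro s hs t ht
  rcases le_total s t with hst | hts
  · rw [abs_sub_comm, abs_of_nonneg (sub_nonneg.2 hst)]
    exact h s hs t ht hst
  · rw [abs_of_nonneg (sub_nonneg.2 hts), dist_comm]
    exact h t ht s hs hts

section Concat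

variable {η σ : ℝ → X} {h L s u : ℝ}

/-- Since `η` ends at a point of `σ` nearest to `η 0`, the concatenation backtracks at the
junction by at most a factor `3`. -/
lemma le_three_mul_dist_of_nearest (hη : IsGeodesicOn η (Icc 0 h))
    (hσ : IsGeodesicOn σ (Icc 0 L)) (hjoin : η h = σ 0)
    (hmin : ∀ u ∈ Icc 0 L, h ≤ dist (η 0) (σ u)) (hs : s ∈ Icc 0 h) (hu : u ∈ Icc 0 L) :
    h - s + u ≤ 3 * dist (η s) (σ u) := by
  have hh : h ∈ Icc 0 h := right_mem_Icc.2 (hs.1.trans hs.2)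
  have hjs : dist (η s) (σ 0) = h - s := by rw [← hjoin, hη.dist_of_le hs hh hs.2]
  linarith [hmin u hu, hη.dist_zero hs, dist_triangle (η 0) (η s) (σ u), hσ.dist_zero hu,
    dist_triangle (σ 0) (η s) (σ u), dist_comm (σ 0) (η s)]

lemma isQuasigeodesicOn_concatAt (hη : IsGeodesicOn η (Icc 0 h))
    (hσ : IsGeodesicOn σ (Icc 0 L)) (hjoin : η h = σ 0)
    (hmin : ∀ u ∈ Icc 0 L, h ≤ dist (η 0) (σ u)) :
    IsQuasigeodesicOn 3 0 (concatAt η σ h) (Icc 0 (h + L)) := by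
  refine isQuasigeodesicOn_of_le fun s hs t ht hst => ?_
  suffices t - s ≤ 3 * dist (concatAt η σ h s) (concatAt η σ h t) ∧
      dist (concatAt η σ h s) (concatAt η σ h t) ≤ t - s by
    constructor <;> linarith
  rcases le_or_gt t h with hth | hth
  · rw [concatAt_of_le (hst.trans hth), concatAt_of_le hth,
      hη.dist_of_le ⟨hs.1, hst.trans hth⟩ ⟨hs.1.trans hst, hth⟩ hst]
    constructor <;> linarith
  obtain ⟨b, rfl⟩ : ∃ b, t = h + b := ⟨t - h, by ring⟩
  have hb : b ∈ Icc 0 L := ⟨by linarith, by linarith [ht.2]⟩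
  rw [concatAt_add hjoin hb.1]
  rcases le_or_gt s h with hsh | hsh
  · have hs' : s ∈ Icc 0 h := ⟨hs.1, hsh⟩
    have hh : h ∈ Icc 0 h := ⟨hs.1.trans hsh, le_rfl⟩
    rw [concatAt_of_le hsh]
    refine ⟨by linarith [le_three_mul_dist_of_nearest hη hσ hjoin hmin hs' hb], ?_⟩
    have hhb : dist (η h) (σ b) = b := by rw [hjoin, hσ.dist_zero hb]
    linarith [dist_triangle (η s) (η h) (σ b), hη.dist_of_le hs' hh hsh]
  · obtain ⟨a, rfl⟩ : ∃ a, s = h + a := ⟨s - h, by ring⟩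
    rw [concatAt_add hjoin (by linarith),
      hσ.dist_of_le ⟨by linarith, by linarith [hb.2]⟩ hb (by linarith)]
    constructor <;> linarith

end Concat

structure IsMorseGeodesic (N : ℝ → ℝ → ℝ) (γ : ℝ → X) (L : ℝ) (x y : X) : Prop where
  nonneg : 0 ≤ L
  isGeodesicOn : IsGeodesicOn γ (Icc 0 L)
  source : γ 0 = x
  target : γ L = y
  isMorseOn : IsMorseOn N γ (Icc 0 L)

lemma mem_stratum_iff {N : ℝ → ℝ → ℝ} {e y : X} :
    y ∈ stratum N e ↔ ∃ γ L, IsMorseGeodesic N γ L e y :=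
  ⟨fun ⟨γ, L, h0, hg, hs, ht, hm⟩ => ⟨γ, L, h0, hg, hs, ht, hm⟩,
    fun ⟨γ, L, h⟩ => ⟨γ, L, h.1, h.2, h.3, h.4, h.5⟩⟩

namespace IsMorseGeodesic

variable {N : ℝ → ℝ → ℝ} {α : ℝ → X} {L t : ℝ} {e x : X}

lemma dist_source (hα : IsMorseGeodesic N α L e x) (ht : t ∈ Icc 0 L) : dist e (α t) = t := by
  rw [← hα.source, hα.isGeodesicOn.dist_zero ht]

lemma dist_eq (hα : IsMorseGeodesic N α L e x) : dist e x = L := by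
  rw [← hα.target, hα.dist_source (right_mem_Icc.2 hα.nonneg)]

lemma dist_le_of_nearest (hα : IsMorseGeodesic N α L e x) {σ η : ℝ → X} {M v h : ℝ}
    (hσ : IsGeodesicOn σ (Icc 0 M)) (hσM : σ M = x) (hv : v ∈ Icc 0 M)
    (hvmin : ∀ u ∈ Icc 0 M, dist e (σ v) ≤ dist e (σ u))
    (hη : IsGeodesicOn η (Icc 0 h)) (hη0 : η 0 = e) (hηh : η h = σ v)
    (hh : dist e (σ v) = h) (ht : t ∈ Icc 0 h) :
    dist (η t) (α t) ≤ 2 * N 3 0 := by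
  have hjoin : η h = (fun u => σ (v + u)) 0 := by simp only [hηh, add_zero]
  have hmin : ∀ u ∈ Icc 0 (M - v), h ≤ dist (η 0) (σ (v + u)) := fun u hu => by
    rw [hη0, ← hh]
    exact hvmin _ ⟨by linarith [hv.1, hu.1], by linarith [hu.2]⟩
  have hq := isQuasigeodesicOn_concatAt hη (hσ.shift hv) hjoin hmin
  have hstart : concatAt η (fun u => σ (v + u)) h 0 = α 0 := by
    rw [concatAt_of_le (ht.1.trans ht.2), hη0, hα.source]
  have hend : concatAt η (fun u => σ (v + u)) h (h + (M - v)) = α L := by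
    rw [concatAt_add hjoin (sub_nonneg.2 hv.2), add_sub_cancel, hσM, hα.target]
  have hnbhd := hα.isMorseOn 3 0 (by norm_num) le_rfl _ 0 (h + (M - v))
    (by linarith [hv.2, ht.1.trans ht.2]) hq ⟨0, left_mem_Icc.2 hα.nonneg, hstart.symm⟩
    ⟨L, right_mem_Icc.2 hα.nonneg, hend.symm⟩
  have htL : t ≤ L := by
    have := hvmin M (right_mem_Icc.2 (hv.1.trans hv.2))
    rw [hσM, hα.dist_eq, hh] at this
    exact ht.2.trans this
  have hmem := hnbhd ⟨t, ⟨ht.1, by linarith [ht.2, hv.2]⟩, rfl⟩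
  rw [concatAt_of_le ht.2] at hmem
  refine hα.isGeodesicOn.dist_le_two_mul_of_mem_nbhd ⟨ht.1, htL⟩ ?_ hmem
  rw [hα.source, ← hη0, hη.dist_zero ht]

lemma dist_le_of_le_gromovProd (hX : GeodesicSpace X) (hα : IsMorseGeodesic N α L e x)
    {ζ : ℝ → X} {L' : ℝ} {z : X} (hζ : IsMorseGeodesic N ζ L' e z)
    (ht : t ∈ Icc 0 (gromovProd e x z)) :
    dist (α t) (ζ t) ≤ 4 * N 3 0 := by
  obtain ⟨σ, hσ, hσ0, hσM⟩ := hX z x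
  set M := dist z x
  obtain ⟨v, hv, hvmin⟩ := hσ.exists_nearest dist_nonneg e
  obtain ⟨η, hη, hη0, hηh⟩ := hX e (σ v)
  have hT : gromovProd e x z ≤ dist e (σ v) := by
    rw [gromovProd_comm, ← hσ0, ← hσM]
    exact hσ.gromovProd_le_dist hv e
  have ht' : t ∈ Icc 0 (dist e (σ v)) := ⟨ht.1, ht.2.trans hT⟩
  have hσv : σ (M - (M - v)) = σ v := by rw [sub_sub_cancel]
  have hαη := hα.dist_le_of_nearest hσ hσM hv hvmin hη hη0 hηh rfl ht'
  have hζη := hζ.dist_le_of_nearest hσ.reverse (by simp only [sub_self, hσ0])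
    ⟨by linarith [hv.2], by linarith [hv.1]⟩
    (fun u hu => hσv ▸ hvmin (M - u) ⟨by linarith [hu.2], by linarith [hu.1]⟩)
    hη hη0 (hηh.trans hσv.symm) (congrArg (dist e) hσv) ht'
  calc dist (α t) (ζ t) ≤ dist (η t) (α t) + dist (η t) (ζ t) := dist_triangle_left _ _ _
    _ ≤ 4 * N 3 0 := by linarith

end IsMorseGeodesic

def IsHyperbolicAt (S : Set X) (w : X) (δ : ℝ) : Prop :=
  ∀ x ∈ S, ∀ y ∈ S, ∀ z ∈ S, min (gromovProd w x z) (gromovProd w z y) - δ ≤ gromovProd w x y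

namespace IsHyperbolicAt

variable {S : Set X} {e w : X} {δ : ℝ}

lemma four_point (hS : IsHyperbolicAt S e δ) (hw : w ∈ S) {x y z : X} (hx : x ∈ S) (hy : y ∈ S)
    (hz : z ∈ S) :
    min (gromovProd e x z + gromovProd e w y) (gromovProd e z y + gromovProd e w x) - 2 * δ ≤
      gromovProd e x y + gromovProd e w z := by
  have h1 := hS x hx y hy z hz
  have h2 := hS x hx y hy w hw
  have h3 := hS w hw z hz x hx
  have h4 := hS w hw z hz y hy
  rw [gromovProd_comm e x w] at h2
  rw [gromovProd_comm e y z] at h4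
  simp only [min_def] at *
  split_ifs at * <;> linarith

lemma of_base (hS : IsHyperbolicAt S e δ) (hw : w ∈ S) : IsHyperbolicAt S w (2 * δ) := by
  intro x hx y hy z hz
  have hsum := hS.four_point hw hx hy hz
  have hmin : min (gromovProd w x z) (gromovProd w z y) =
      dist e w - gromovProd e w x - gromovProd e w z - gromovProd e w y +
        min (gromovProd e x z + gromovProd e w y) (gromovProd e z y + gromovProd e w x) := by
    rw [← min_add_add_left, gromovProd_eq_base_change e w x z, gromovProd_eq_base_change e w z y]
    congr 1 <;> ring
  rw [hmin, gromovProd_eq_base_change e w x y]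
  linarith

end IsHyperbolicAt

lemma isHyperbolicAt_stratum (hX : GeodesicSpace X) (N : ℝ → ℝ → ℝ) (e : X) :
    IsHyperbolicAt (stratum N e) e (4 * N 3 0) := by
  intro x hx y hy z hz
  obtain ⟨α, L, hα⟩ := mem_stratum_iff.1 hx
  obtain ⟨β, L', hβ⟩ := mem_stratum_iff.1 hy
  obtain ⟨ζ, L'', hζ⟩ := mem_stratum_iff.1 hz
  set m := min (gromovProd e x z) (gromovProd e z y)
  have hm0 : 0 ≤ m := le_min (gromovProd_nonneg _ _ _) (gromovProd_nonneg _ _ _)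
  have hmx : m ∈ Icc 0 (gromovProd e x z) := ⟨hm0, min_le_left _ _⟩
  have hmy : m ∈ Icc 0 (gromovProd e z y) := ⟨hm0, min_le_right _ _⟩
  have hmL : m ∈ Icc 0 L := ⟨hm0, hmx.2.trans (hα.dist_eq ▸ gromovProd_le_dist_left e x z)⟩
  have hmL' : m ∈ Icc 0 L' :=
    ⟨hm0, hmy.2.trans (gromovProd_comm e z y ▸ hβ.dist_eq ▸ gromovProd_le_dist_left e y z)⟩
  have hαβ : dist (α m) (β m) ≤ 8 * N 3 0 := by
    linarith [dist_triangle (α m) (ζ m) (β m), hα.dist_le_of_le_gromovProd hX hζ hmx,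
      hζ.dist_le_of_le_gromovProd hX hβ hmy]
  calc m - 4 * N 3 0 ≤ gromovProd e (α m) (β m) := by
        unfold gromovProd
        rw [hα.dist_source hmL, hβ.dist_source hmL']
        linarith
    _ ≤ gromovProd e x (β m) := by
        simpa only [hα.source, hα.target] using hα.isGeodesicOn.gromovProd_le hmL (β m)
    _ = gromovProd e (β m) x := gromovProd_comm _ _ _
    _ ≤ gromovProd e y x := by
        simpa only [hβ.source, hβ.target] using hβ.isGeodesicOn.gromovProd_le hmL' x
    _ = gromovProd e x y := gromovProd_comm _ _ _

end

theorem stmt13_general {X : Type*} [MetricSpace X] (hX : GeodesicSpace X)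
    (N : ℝ → ℝ → ℝ) (e : X) :
    ∀ w ∈ stratum N e, ∀ x ∈ stratum N e, ∀ y ∈ stratum N e, ∀ z ∈ stratum N e,
      min (gromovProd w x z) (gromovProd w z y) - 8 * N 3 0 ≤ gromovProd w x y := by
  intro w hw
  have h := (isHyperbolicAt_stratum hX N e).of_base hw
  rwa [← mul_assoc, show (2 : ℝ) * 4 = 8 by norm_num] at h

/-- the stratum `X_e^{(N)}` is 8·N(3,0)-hyperbolic in the four-point
Gromov product sense. -/
theorem stmt13 {X : Type*} [MetricSpace X] (hX : GeodesicSpace X)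
    (N : ℝ → ℝ → ℝ) (hN : MorseGauge N) (e : X) :
    ∀ w ∈ stratum N e, ∀ x ∈ stratum N e, ∀ y ∈ stratum N e, ∀ z ∈ stratum N e,
      min (gromovProd w x z) (gromovProd w z y) - 8 * N 3 0 ≤ gromovProd w x y :=
  stmt13_general hX N e
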